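/- There exists an absolute constant c > 0 such that for every n ≥ 1, the Walsh–Kaczmarz–Fejér kernel satisfies ∫_G |K_n^κ(x)| dμ(x) ≤ c; consequently, for every f ∈ L^∞(G) and every n ≥ 1, ‖σ_n^κ f‖_∞ ≤ c ‖f‖_∞. -/

import Mathlib

open MeasureTheory ENNReal

noncomputable section

/-- The Walsh group: countable product of copies of ℤ₂. -/
abbrev G : Type := ℕ → ZMod 2

instance : TopologicalSpace (ZMod 2) := ⊥
instance : DiscreteTopology (ZMod 2) := ⟨rfl⟩
instance : IsTopologicalAddGroup (ZMod 2) :=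
  { continuous_add := continuous_of_discreteTopology
    continuous_neg := continuous_of_discreteTopology }
instance : MeasurableSpace G := borel G
instance : BorelSpace G := ⟨rfl⟩

/-- The normalized Haar (= product) measure on `G`. -/
def μ : Measure G := Measure.addHaarMeasure (⊤ : TopologicalSpace.PositiveCompacts G)

/-- The `k`-th Rademacher function. -/
def rad (k : ℕ) (x : G) : ℝ := (-1 : ℝ) ^ (x k).val

/-- `|n| = ⌊log₂ n⌋`. -/
def lg (n : ℕ) : ℕ := Nat.log 2 n

/-- The Walsh–Paley functions. -/
def walsh (n : ℕ) (x : G) : ℝ :=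
  ∏ k ∈ Finset.range (n + 1), rad k x ^ (n.testBit k).toNat

/-- The Walsh–Kaczmarz functions. -/
def kacz (n : ℕ) (x : G) : ℝ :=
  if n = 0 then 1
  else rad (lg n) x *
    ∏ k ∈ Finset.range (lg n), rad (lg n - 1 - k) x ^ (n.testBit k).toNat

/-- Walsh–Paley Dirichlet kernel. -/
def DW (n : ℕ) (x : G) : ℝ := ∑ k ∈ Finset.range n, walsh k x

/-- Walsh–Kaczmarz Dirichlet kernel. -/
def DK (n : ℕ) (x : G) : ℝ := ∑ k ∈ Finset.range n, kacz k x

/-- Walsh–Paley Fejér kernel (with `KW 0 = 0`). -/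
def KW (n : ℕ) (x : G) : ℝ := (∑ k ∈ Finset.range n, DW k x) / n

/-- Walsh–Kaczmarz Fejér kernel. -/
def KK (n : ℕ) (x : G) : ℝ := (∑ k ∈ Finset.range n, DK k x) / n

/-- Reversal of the first `A` coordinates. -/
def tau (A : ℕ) (x : G) : G := fun k => if k < A then x (A - 1 - k) else x k

/-- Walsh–Fourier coefficients. -/
def coefW (f : G → ℝ) (i : ℕ) : ℝ := ∫ x, f x * walsh i x ∂μ

/-- Walsh–Kaczmarz–Fourier coefficients. -/
def coefK (f : G → ℝ) (i : ℕ) : ℝ := ∫ x, f x * kacz i x ∂μ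

/-- Partial sums of the Walsh–Fourier series. -/
def SW (f : G → ℝ) (M : ℕ) (x : G) : ℝ := ∑ i ∈ Finset.range M, coefW f i * walsh i x

/-- Partial sums of the Walsh–Kaczmarz–Fourier series. -/
def SK (f : G → ℝ) (M : ℕ) (x : G) : ℝ := ∑ i ∈ Finset.range M, coefK f i * kacz i x

/-- Fejér means of the Walsh–Kaczmarz–Fourier series. -/
def sigmaK (f : G → ℝ) (n : ℕ) (x : G) : ℝ := (∑ j ∈ Finset.range n, SK f j x) / n

/-- The dyadic martingale maximal function. -/
def fstar (f : G → ℝ) (x : G) : ℝ≥0∞ := ⨆ n : ℕ, ENNReal.ofReal |SW f (2 ^ n) x|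

/-- Dyadic interval of rank `n` around `x`. -/
def cyl (n : ℕ) (x : G) : Set G := {y : G | ∀ k < n, y k = x k}

/-- Dyadic interval `I_n` around `0`. -/
def In (n : ℕ) : Set G := cyl n 0

/-- `e t`: the element of `G` whose `t`-th coordinate is `1` and the rest are `0`. -/
def e (t : ℕ) : G := fun k => if k = t then 1 else 0

/-- `q_m = 2^{2m} + 2^{2m-2} + ⋯ + 2² + 2⁰`. -/
def qA (m : ℕ) : ℕ := ∑ i ∈ Finset.range (m + 1), 4 ^ i

/-- `f_m = D_{2^{2m+1}}^w − D_{2^{2m}}^w`. -/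
def fm (m : ℕ) (x : G) : ℝ := DW (2 ^ (2 * m + 1)) x - DW (2 ^ (2 * m)) x

/-- The weak `L^p` quasinorm `‖f‖_{L_{p,∞}} = sup_{λ>0} λ · μ{|f|>λ}^{1/p}`. -/
def wnorm (f : G → ℝ) (p : ℝ) : ℝ≥0∞ :=
  ⨆ (l : ℝ) (_ : 0 < l), ENNReal.ofReal l * μ {x : G | l < |f x|} ^ (1 / p)

/-- The set `J_N^{m,l}` (with `m : ℤ`, `-1 ≤ m ≤ l`). -/
def Jset (N l : ℕ) (m : ℤ) : Set G :=
  {x : G | (∀ j : ℕ, m < (j : ℤ) → j < l → x j = 0) ∧ x l = 1 ∧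
    (∀ j : ℕ, l < j → j < N → x j = 0) ∧ (0 ≤ m → x m.toNat = 1)}

/- ### Auxiliary algebraic lemmas -/

lemma zmod2_cases (a : ZMod 2) : a = 0 ∨ a = 1 := by revert a; decide

lemma rad_abs (k : ℕ) (x : G) : |rad k x| = 1 := by
  unfold rad
  rcases zmod2_cases (x k) with h | h <;> rw [h] <;> norm_num

lemma rad_add (k : ℕ) (x y : G) : rad k (x + y) = rad k x * rad k y := by
  unfold rad
  have hxy : (x + y) k = x k + y k := rfl
  rw [hxy]
  have h11 : (1 + 1 : ZMod 2) = 0 := rfl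
  have v0 : (0 : ZMod 2).val = 0 := rfl
  have v1 : (1 : ZMod 2).val = 1 := rfl
  rcases zmod2_cases (x k) with h | h <;> rcases zmod2_cases (y k) with h' | h' <;>
    rw [h, h'] <;> simp [h11, v0, v1]

/-- `walsh` as a product over any sufficiently long range. -/
lemma walsh_eq_prod {n M : ℕ} (h : n < 2 ^ M) (x : G) :
    walsh n x = ∏ k ∈ Finset.range M, rad k x ^ (n.testBit k).toNat := by
  unfold walsh
  have key : ∀ P Q : ℕ, P ≤ Q → n < 2 ^ P →
      (∏ k ∈ Finset.range Q, rad k x ^ (n.testBit k).toNat)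
        = ∏ k ∈ Finset.range P, rad k x ^ (n.testBit k).toNat := by
    intro P Q hPQ hn
    rw [← Finset.prod_range_mul_prod_Ico _ hPQ]
    have : ∀ k ∈ Finset.Ico P Q, rad k x ^ (n.testBit k).toNat = 1 := by
      intro k hk
      have hPk : P ≤ k := (Finset.mem_Ico.mp hk).1
      have : n.testBit k = false :=
        Nat.testBit_eq_false_of_lt (lt_of_lt_of_le hn (Nat.pow_le_pow_right (by norm_num) hPk))
      simp [this]
    rw [Finset.prod_congr rfl this]
    simp
  have hn1 : n < 2 ^ (n + 1) :=
    lt_of_lt_of_le Nat.lt_two_pow_self (Nat.pow_le_pow_right (by norm_num) (Nat.le_succ n))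
  rcases le_total (n + 1) M with hM | hM
  · exact (key (n+1) M hM hn1).symm
  · exact key M (n+1) hM h

lemma two_pow_add_lt {A j : ℕ} (hj : j < 2 ^ A) : 2 ^ A + j < 2 ^ (A + 1) := by
  have : 2 ^ (A + 1) = 2 ^ A + 2 ^ A := by ring
  omega

lemma walsh_two_pow_add {A j : ℕ} (hj : j < 2 ^ A) (x : G) :
    walsh (2 ^ A + j) x = rad A x * walsh j x := by
  rw [walsh_eq_prod (two_pow_add_lt hj) x, Finset.prod_range_succ, walsh_eq_prod hj x]
  have hA : (2 ^ A + j).testBit A = true := by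
    rw [Nat.testBit_two_pow_add_eq, Nat.testBit_eq_false_of_lt hj]
    rfl
  have hlt : ∀ k ∈ Finset.range A, rad k x ^ ((2 ^ A + j).testBit k).toNat
      = rad k x ^ (j.testBit k).toNat := by
    intro k hk
    rw [Nat.testBit_two_pow_add_gt (Finset.mem_range.mp hk)]
  rw [Finset.prod_congr rfl hlt, hA]
  simp [Bool.toNat]
  ring

lemma DW_two_pow_add {A i : ℕ} (hi : i ≤ 2 ^ A) (x : G) :
    DW (2 ^ A + i) x = DW (2 ^ A) x + rad A x * DW i x := by
  unfold DW
  rw [Finset.sum_range_add, Finset.mul_sum]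
  congr 1
  refine Finset.sum_congr rfl fun t ht => ?_
  exact walsh_two_pow_add (lt_of_lt_of_le (Finset.mem_range.mp ht) hi) x

lemma walsh_zero (x : G) : walsh 0 x = 1 := by
  unfold walsh; simp

lemma DW_one (x : G) : DW 1 x = 1 := by
  unfold DW; simp [walsh_zero]

lemma DW_two_pow_prod (A : ℕ) (x : G) :
    DW (2 ^ A) x = ∏ k ∈ Finset.range A, (1 + rad k x) := by
  induction A with
  | zero => simpa using DW_one x
  | succ A ih =>
    have h : (2 : ℕ) ^ (A + 1) = 2 ^ A + 2 ^ A := by ring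
    rw [h, DW_two_pow_add (le_refl _) x, Finset.prod_range_succ, ← ih]
    ring

lemma DW_two_pow_eq (A : ℕ) (x : G) :
    DW (2 ^ A) x = if ∀ k < A, x k = 0 then (2 ^ A : ℝ) else 0 := by
  rw [DW_two_pow_prod]
  by_cases h : ∀ k < A, x k = 0
  · rw [if_pos h]
    have : ∀ k ∈ Finset.range A, (1 + rad k x) = 2 := by
      intro k hk
      have : x k = 0 := h k (Finset.mem_range.mp hk)
      unfold rad; rw [this]; norm_num
    rw [Finset.prod_congr rfl this, Finset.prod_const, Finset.card_range]
  · rw [if_neg h]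
    push_neg at h
    obtain ⟨k, hk, hxk⟩ := h
    have hx1 : x k = 1 := (zmod2_cases (x k)).resolve_left hxk
    refine Finset.prod_eq_zero (Finset.mem_range.mpr hk) ?_
    unfold rad; rw [hx1]
    norm_num [show (1 : ZMod 2).val = 1 from rfl]

lemma DW_two_pow_nonneg (A : ℕ) (x : G) : 0 ≤ DW (2 ^ A) x := by
  rw [DW_two_pow_eq]; split <;> positivity

lemma lg_two_pow_add {A j : ℕ} (hj : j < 2 ^ A) : lg (2 ^ A + j) = A := by
  unfold lg
  exact Nat.log_eq_of_pow_le_of_lt_pow (Nat.le_add_right _ _) (two_pow_add_lt hj)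

lemma tau_rad {A k : ℕ} (hk : k < A) (x : G) : rad k (tau A x) = rad (A - 1 - k) x := by
  unfold rad tau
  rw [if_pos hk]

lemma kacz_two_pow_add {A j : ℕ} (hj : j < 2 ^ A) (x : G) :
    kacz (2 ^ A + j) x = rad A x * walsh j (tau A x) := by
  unfold kacz
  rw [if_neg (by positivity), lg_two_pow_add hj, walsh_eq_prod hj]
  congr 1
  refine Finset.prod_congr rfl fun k hk => ?_
  rw [tau_rad (Finset.mem_range.mp hk), Nat.testBit_two_pow_add_gt (Finset.mem_range.mp hk)]

lemma tau_all_zero (A : ℕ) (x : G) :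
    (∀ k < A, tau A x k = 0) ↔ (∀ k < A, x k = 0) := by
  constructor
  · intro h k hk
    have h2 : A - 1 - k < A := by omega
    have := h (A - 1 - k) h2
    unfold tau at this
    rw [if_pos h2] at this
    have : x (A - 1 - (A - 1 - k)) = 0 := this
    rwa [show A - 1 - (A - 1 - k) = k by omega] at this
  · intro h k hk
    unfold tau
    rw [if_pos hk]
    exact h _ (by omega)

lemma DW_two_pow_tau (A : ℕ) (x : G) : DW (2 ^ A) (tau A x) = DW (2 ^ A) x := by
  rw [DW_two_pow_eq, DW_two_pow_eq]
  simp [tau_all_zero]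

lemma kacz_zero (x : G) : kacz 0 x = 1 := by unfold kacz; simp

lemma DK_one (x : G) : DK 1 x = 1 := by unfold DK; simp [kacz_zero]

lemma DK_two_pow (A : ℕ) (x : G) : DK (2 ^ A) x = DW (2 ^ A) x := by
  induction A with
  | zero => simp [DK_one, DW_one]
  | succ A ih =>
    have h : (2 : ℕ) ^ (A + 1) = 2 ^ A + 2 ^ A := by ring
    rw [h]
    unfold DK
    rw [Finset.sum_range_add]
    have h1 : ∀ t ∈ Finset.range (2 ^ A), kacz (2 ^ A + t) x = rad A x * walsh t (tau A x) :=
      fun t ht => kacz_two_pow_add (Finset.mem_range.mp ht) x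
    rw [Finset.sum_congr rfl h1, ← Finset.mul_sum]
    have h2 : ∑ t ∈ Finset.range (2 ^ A), walsh t (tau A x) = DW (2 ^ A) (tau A x) := rfl
    have h3 : ∑ t ∈ Finset.range (2 ^ A), kacz t x = DK (2 ^ A) x := rfl
    rw [h2, h3, ih, DW_two_pow_tau, DW_two_pow_add (le_refl _) x]

lemma DK_two_pow_add {A j : ℕ} (hj : j ≤ 2 ^ A) (x : G) :
    DK (2 ^ A + j) x = DW (2 ^ A) x + rad A x * DW j (tau A x) := by
  unfold DK
  rw [Finset.sum_range_add]
  have h1 : ∀ t ∈ Finset.range j, kacz (2 ^ A + t) x = rad A x * walsh t (tau A x) :=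
    fun t ht => kacz_two_pow_add (lt_of_lt_of_le (Finset.mem_range.mp ht) hj) x
  rw [Finset.sum_congr rfl h1, ← Finset.mul_sum]
  have h3 : ∑ t ∈ Finset.range (2 ^ A), kacz t x = DK (2 ^ A) x := rfl
  rw [h3, DK_two_pow]
  rfl

/-- `n`-times the Walsh–Paley Fejér kernel. -/
def SDW (n : ℕ) (x : G) : ℝ := ∑ k ∈ Finset.range n, DW k x

/-- `n`-times the Walsh–Kaczmarz Fejér kernel. -/
def SDK (n : ℕ) (x : G) : ℝ := ∑ k ∈ Finset.range n, DK k x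

lemma KW_eq (n : ℕ) (x : G) : KW n x = SDW n x / n := rfl
lemma KK_eq (n : ℕ) (x : G) : KK n x = SDK n x / n := rfl

lemma SDW_two_pow_add {A j : ℕ} (hj : j ≤ 2 ^ A) (x : G) :
    SDW (2 ^ A + j) x = SDW (2 ^ A) x + j * DW (2 ^ A) x + rad A x * SDW j x := by
  unfold SDW
  rw [Finset.sum_range_add]
  have h1 : ∀ t ∈ Finset.range j, DW (2 ^ A + t) x = DW (2 ^ A) x + rad A x * DW t x :=
    fun t ht => DW_two_pow_add (le_of_lt (lt_of_lt_of_le (Finset.mem_range.mp ht) hj)) x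
  rw [Finset.sum_congr rfl h1, Finset.sum_add_distrib, Finset.sum_const, ← Finset.mul_sum,
    Finset.card_range]
  push_cast
  ring

lemma SDK_two_pow_add {A j : ℕ} (hj : j ≤ 2 ^ A) (x : G) :
    SDK (2 ^ A + j) x = SDK (2 ^ A) x + j * DW (2 ^ A) x + rad A x * SDW j (tau A x) := by
  unfold SDK
  rw [Finset.sum_range_add]
  have h1 : ∀ t ∈ Finset.range j, DK (2 ^ A + t) x
      = DW (2 ^ A) x + rad A x * DW t (tau A x) :=
    fun t ht => DK_two_pow_add (le_of_lt (lt_of_lt_of_le (Finset.mem_range.mp ht) hj)) x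
  rw [Finset.sum_congr rfl h1, Finset.sum_add_distrib, Finset.sum_const, ← Finset.mul_sum,
    Finset.card_range]
  unfold SDW
  push_cast [nsmul_eq_mul]
  ring

lemma rad_cases (k : ℕ) (x : G) : rad k x = 1 ∨ rad k x = -1 := by
  unfold rad
  rcases zmod2_cases (x k) with h | h <;> rw [h]
  · left; norm_num [show (0 : ZMod 2).val = 0 from rfl]
  · right; norm_num [show (1 : ZMod 2).val = 1 from rfl]

lemma SDW_two_pow_nonneg (A : ℕ) (x : G) : 0 ≤ SDW (2 ^ A) x := by
  induction A with
  | zero =>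
    have : SDW (2 ^ 0) x = 0 := by unfold SDW DW; simp
    rw [this]
  | succ A ih =>
    have h : (2 : ℕ) ^ (A + 1) = 2 ^ A + 2 ^ A := by ring
    rw [h, SDW_two_pow_add (le_refl _) x]
    have h1 : 0 ≤ ((2 ^ A : ℕ) : ℝ) * DW (2 ^ A) x :=
      mul_nonneg (by positivity) (DW_two_pow_nonneg A x)
    rcases rad_cases A x with hr | hr <;> rw [hr] <;> linarith

/- ### Finite-dimensional reduction -/

/-- Extension of a finite pattern by zeros. -/
def extN (N : ℕ) (v : Fin N → ZMod 2) : G := fun k => if h : k < N then v ⟨k, h⟩ else 0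

/-- Restriction of `x` to its first `N` coordinates. -/
def resN (N : ℕ) (x : G) : Fin N → ZMod 2 := fun i => x i

/-- Sum of `f` over all points with support in the first `N` coordinates. -/
def sumOn (N : ℕ) (f : G → ℝ) : ℝ := ∑ v : Fin N → ZMod 2, f (extN N v)

/-- Sum of `|f|` over all points with support in the first `N` coordinates. -/
def asum (N : ℕ) (f : G → ℝ) : ℝ := ∑ v : Fin N → ZMod 2, |f (extN N v)|

lemma extN_lt {N : ℕ} (v : Fin N → ZMod 2) {k : ℕ} (h : k < N) :
    extN N v k = v ⟨k, h⟩ := dif_pos h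

lemma sumOn_walsh {N j : ℕ} (hj : j < 2 ^ N) :
    sumOn N (walsh j) = if j = 0 then (2 ^ N : ℝ) else 0 := by
  unfold sumOn
  have h1 : ∀ v : Fin N → ZMod 2,
      walsh j (extN N v) = ∏ i : Fin N, ((-1 : ℝ) ^ (v i).val) ^ (j.testBit i).toNat := by
    intro v
    rw [walsh_eq_prod hj, ← Fin.prod_univ_eq_prod_range]
    refine Finset.prod_congr rfl fun i _ => ?_
    unfold rad
    rw [extN_lt v i.isLt]
  rw [Finset.sum_congr rfl fun v _ => h1 v]
  have h2 := Finset.sum_prod_piFinset (Finset.univ : Finset (ZMod 2))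
      (fun (i : Fin N) (a : ZMod 2) => ((-1 : ℝ) ^ a.val) ^ (j.testBit i).toNat)
  have hpi : Fintype.piFinset (fun _ : Fin N => (Finset.univ : Finset (ZMod 2)))
      = (Finset.univ : Finset (Fin N → ZMod 2)) := by
    ext v; simp
  rw [hpi] at h2
  rw [h2]
  have hsum : ∀ i : Fin N, ∑ a : ZMod 2, ((-1 : ℝ) ^ a.val) ^ (j.testBit i).toNat
      = if j.testBit i then 0 else 2 := by
    intro i
    have : (Finset.univ : Finset (ZMod 2)) = {0, 1} := by decide
    rw [this]
    by_cases hb : j.testBit i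
    · rw [hb]
      norm_num [show (0 : ZMod 2).val = 0 from rfl, show (1 : ZMod 2).val = 1 from rfl]
    · rw [Bool.not_eq_true] at hb
      rw [hb]
      norm_num
  rw [Finset.prod_congr rfl fun i _ => hsum i]
  by_cases h0 : j = 0
  · rw [if_pos h0]
    have : ∀ i : Fin N, (if j.testBit i then (0 : ℝ) else 2) = 2 := by
      intro i; rw [h0]; simp
    rw [Finset.prod_congr rfl fun i _ => this i, Finset.prod_const, Finset.card_univ,
      Fintype.card_fin]
  · rw [if_neg h0]
    obtain ⟨i, hi, -⟩ := Nat.exists_most_significant_bit h0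
    have hge : 2 ^ i ≤ j := Nat.ge_two_pow_of_testBit hi
    have hiN : i < N := by
      by_contra hc
      push_neg at hc
      exact absurd hj (not_lt.mpr (le_trans (Nat.pow_le_pow_right (by norm_num) hc) hge))
    refine Finset.prod_eq_zero (Finset.mem_univ (⟨i, hiN⟩ : Fin N)) ?_
    simp [hi]

lemma sumOn_add (N : ℕ) (f g : G → ℝ) :
    sumOn N (fun x => f x + g x) = sumOn N f + sumOn N g := by
  unfold sumOn; rw [← Finset.sum_add_distrib]

lemma sumOn_DW_le {N k : ℕ} (hk : k ≤ 2 ^ N) : sumOn N (DW k) ≤ 2 ^ N := by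
  have : sumOn N (DW k) = ∑ i ∈ Finset.range k, sumOn N (walsh i) := by
    unfold sumOn DW
    rw [Finset.sum_comm]
  rw [this]
  have h1 : ∀ i ∈ Finset.range k, sumOn N (walsh i) = if i = 0 then (2 ^ N : ℝ) else 0 :=
    fun i hi => sumOn_walsh (lt_of_lt_of_le (Finset.mem_range.mp hi) hk)
  rw [Finset.sum_congr rfl h1]
  rcases Nat.eq_zero_or_pos k with h | h
  · subst h
    simp
  · rw [Finset.sum_ite_eq' (Finset.range k) 0 (fun _ => (2 ^ N : ℝ))]
    simp [Finset.mem_range, h]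

/-- The reversal `tau A` acts as a bijection on patterns. -/
lemma asum_tau {N A : ℕ} (hA : A ≤ N) (f : G → ℝ) :
    asum N (fun x => f (tau A x)) = asum N f := by
  unfold asum
  set σ : (Fin N → ZMod 2) → (Fin N → ZMod 2) :=
    fun v i => if h : (i : ℕ) < A then v ⟨A - 1 - i, by omega⟩ else v i with hσ
  have key : ∀ v, tau A (extN N v) = extN N (σ v) := by
    intro v
    funext k
    unfold tau extN
    by_cases h2 : k < N
    · by_cases h1 : k < A
      · rw [if_pos h1, dif_pos (by omega : A - 1 - k < N), dif_pos h2, hσ]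
        simp only
        rw [dif_pos (show ((⟨k, h2⟩ : Fin N) : ℕ) < A from h1)]
      · rw [if_neg h1, dif_pos h2, dif_pos h2, hσ]
        simp only
        rw [dif_neg (show ¬((⟨k, h2⟩ : Fin N) : ℕ) < A from h1)]
    · have h1 : ¬ k < A := by omega
      rw [if_neg h1, dif_neg h2, dif_neg h2]
  have hinv : Function.Involutive σ := by
    intro v
    funext i
    rw [hσ]
    simp only
    by_cases h1 : (i : ℕ) < A
    · rw [dif_pos h1, dif_pos (by omega : A - 1 - (i : ℕ) < A)]
      congr 1
      ext
      simp
      omega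
    · rw [dif_neg h1, dif_neg h1]
  rw [show (fun v => |f (tau A (extN N v))|) = fun v => |f (extN N (σ v))| by
    funext v; rw [key v]]
  exact Fintype.sum_bijective σ hinv.bijective _ _ (fun v => rfl)

lemma asum_eq_sumOn_of_nonneg {N : ℕ} {f : G → ℝ} (hf : ∀ x, 0 ≤ f x) :
    asum N f = sumOn N f := by
  unfold asum sumOn
  exact Finset.sum_congr rfl fun v _ => abs_of_nonneg (hf _)

lemma asum_SDW_two_pow {N A : ℕ} (h : 2 ^ A ≤ 2 ^ N) :
    asum N (SDW (2 ^ A)) ≤ 2 ^ A * 2 ^ N := by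
  rw [asum_eq_sumOn_of_nonneg (SDW_two_pow_nonneg A)]
  have : sumOn N (SDW (2 ^ A)) = ∑ k ∈ Finset.range (2 ^ A), sumOn N (DW k) := by
    unfold sumOn SDW
    rw [Finset.sum_comm]
  rw [this]
  calc ∑ k ∈ Finset.range (2 ^ A), sumOn N (DW k)
      ≤ ∑ _k ∈ Finset.range (2 ^ A), (2 ^ N : ℝ) :=
        Finset.sum_le_sum fun k hk =>
          sumOn_DW_le (le_trans (le_of_lt (Finset.mem_range.mp hk)) h)
    _ = 2 ^ A * 2 ^ N := by
        rw [Finset.sum_const, Finset.card_range, nsmul_eq_mul]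
        push_cast
        ring

lemma asum_DW_two_pow {N A : ℕ} (h : 2 ^ A ≤ 2 ^ N) :
    asum N (DW (2 ^ A)) ≤ 2 ^ N := by
  rw [asum_eq_sumOn_of_nonneg (DW_two_pow_nonneg A)]
  exact sumOn_DW_le h

lemma SDW_zero (x : G) : SDW 0 x = 0 := by unfold SDW; simp

lemma SDW_one (x : G) : SDW 1 x = 0 := by
  unfold SDW DW; simp

lemma asum_SDW_le {N : ℕ} : ∀ m, m ≤ 2 ^ N → asum N (SDW m) ≤ 2 * m * 2 ^ N := by
  intro m
  induction m using Nat.strong_induction_on with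
  | _ m ih =>
    intro hm
    match m, ih with
    | 0, _ =>
      unfold asum
      simp [SDW_zero]
    | 1, _ =>
      unfold asum
      simp only [SDW_one, abs_zero]
      simp
    | (m + 2), ih =>
      set m' := m + 2 with hm'
      set A := Nat.log 2 (m' - 1) with hA
      have h1 : 2 ^ A ≤ m' - 1 := Nat.pow_log_le_self 2 (by omega)
      have h2 : m' - 1 < 2 ^ (A + 1) := Nat.lt_pow_succ_log_self (by norm_num) _
      have hpow : (2 : ℕ) ^ (A + 1) = 2 ^ A + 2 ^ A := by ring
      set j := m' - 2 ^ A with hj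
      have hj1 : 1 ≤ j := by omega
      have hj2 : j ≤ 2 ^ A := by omega
      have hmeq : m' = 2 ^ A + j := by omega
      have hAN : 2 ^ A ≤ 2 ^ N := le_trans (by omega) hm
      -- pointwise bound
      have hpt : ∀ x : G, |SDW m' x| ≤ |SDW (2 ^ A) x| + (j : ℝ) * |DW (2 ^ A) x| + |SDW j x| := by
        intro x
        rw [hmeq, SDW_two_pow_add hj2 x]
        calc |SDW (2 ^ A) x + (j : ℝ) * DW (2 ^ A) x + rad A x * SDW j x|
            ≤ |SDW (2 ^ A) x + (j : ℝ) * DW (2 ^ A) x| + |rad A x * SDW j x| := abs_add_le _ _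
          _ ≤ |SDW (2 ^ A) x| + |(j : ℝ) * DW (2 ^ A) x| + |rad A x * SDW j x| := by
              have := abs_add_le (SDW (2 ^ A) x) ((j : ℝ) * DW (2 ^ A) x); linarith
          _ = |SDW (2 ^ A) x| + (j : ℝ) * |DW (2 ^ A) x| + |SDW j x| := by
              rw [abs_mul, abs_mul, rad_abs, one_mul, Nat.abs_cast]
      have hsum : asum N (SDW m')
          ≤ asum N (SDW (2 ^ A)) + (j : ℝ) * asum N (DW (2 ^ A)) + asum N (SDW j) := by
        unfold asum
        rw [Finset.mul_sum, ← Finset.sum_add_distrib, ← Finset.sum_add_distrib]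
        exact Finset.sum_le_sum fun v _ => hpt (extN N v)
      have ihj : asum N (SDW j) ≤ 2 * j * 2 ^ N := ih j (by omega) (le_trans hj2 hAN)
      have hb1 := asum_SDW_two_pow hAN
      have hb2 := asum_DW_two_pow hAN
      have hjc : (j : ℝ) ≤ (2 : ℝ) ^ A := by
        calc (j : ℝ) ≤ ((2 ^ A : ℕ) : ℝ) := Nat.cast_le.mpr hj2
        _ = (2 : ℝ) ^ A := by push_cast; ring
      have hjpos : (0 : ℝ) ≤ (j : ℝ) := Nat.cast_nonneg j
      have h2N : (0 : ℝ) < 2 ^ N := by positivity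
      have hcast : (m' : ℝ) = 2 ^ A + (j : ℝ) := by
        rw [hmeq]; push_cast; ring
      rw [hcast]
      nlinarith [mul_nonneg hjpos (le_of_lt h2N)]

lemma SDK_zero (x : G) : SDK 0 x = 0 := by unfold SDK; simp

lemma SDK_one (x : G) : SDK 1 x = 0 := by unfold SDK DK; simp

lemma asum_SDK_le {N : ℕ} : ∀ n, n ≤ 2 ^ N → asum N (SDK n) ≤ 3 * n * 2 ^ N := by
  intro n
  induction n using Nat.strong_induction_on with
  | _ n ih =>
    intro hn
    match n, ih with
    | 0, _ =>
      unfold asum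
      simp [SDK_zero]
    | 1, _ =>
      unfold asum
      simp only [SDK_one, abs_zero]
      simp
    | (m + 2), ih =>
      set m' := m + 2 with hm'
      set A := Nat.log 2 (m' - 1) with hA
      have h1 : 2 ^ A ≤ m' - 1 := Nat.pow_log_le_self 2 (by omega)
      have h2 : m' - 1 < 2 ^ (A + 1) := Nat.lt_pow_succ_log_self (by norm_num) _
      have hpow : (2 : ℕ) ^ (A + 1) = 2 ^ A + 2 ^ A := by ring
      set j := m' - 2 ^ A with hj
      have hj1 : 1 ≤ j := by omega
      have hj2 : j ≤ 2 ^ A := by omega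
      have hmeq : m' = 2 ^ A + j := by omega
      have hAN : 2 ^ A ≤ 2 ^ N := le_trans (by omega) hn
      have hAleN : A ≤ N := (Nat.pow_le_pow_iff_right (by norm_num)).mp hAN
      have hpt : ∀ x : G, |SDK m' x|
          ≤ |SDK (2 ^ A) x| + (j : ℝ) * |DW (2 ^ A) x| + |SDW j (tau A x)| := by
        intro x
        rw [hmeq, SDK_two_pow_add hj2 x]
        calc |SDK (2 ^ A) x + (j : ℝ) * DW (2 ^ A) x + rad A x * SDW j (tau A x)|
            ≤ |SDK (2 ^ A) x + (j : ℝ) * DW (2 ^ A) x| + |rad A x * SDW j (tau A x)| :=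
              abs_add_le _ _
          _ ≤ |SDK (2 ^ A) x| + |(j : ℝ) * DW (2 ^ A) x| + |rad A x * SDW j (tau A x)| := by
              have := abs_add_le (SDK (2 ^ A) x) ((j : ℝ) * DW (2 ^ A) x); linarith
          _ = |SDK (2 ^ A) x| + (j : ℝ) * |DW (2 ^ A) x| + |SDW j (tau A x)| := by
              rw [abs_mul, abs_mul, rad_abs, one_mul, Nat.abs_cast]
      have hsum : asum N (SDK m')
          ≤ asum N (SDK (2 ^ A)) + (j : ℝ) * asum N (DW (2 ^ A))
            + asum N (fun x => SDW j (tau A x)) := by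
        unfold asum
        rw [Finset.mul_sum, ← Finset.sum_add_distrib, ← Finset.sum_add_distrib]
        exact Finset.sum_le_sum fun v _ => hpt (extN N v)
      rw [asum_tau hAleN (SDW j)] at hsum
      have ihA : asum N (SDK (2 ^ A)) ≤ 3 * (2 ^ A : ℕ) * 2 ^ N := ih (2 ^ A) (by omega) hAN
      have ihj : asum N (SDW j) ≤ 2 * j * 2 ^ N := asum_SDW_le j (le_trans hj2 hAN)
      have hb2 := asum_DW_two_pow hAN
      have hjpos : (0 : ℝ) ≤ (j : ℝ) := Nat.cast_nonneg j
      have h2N : (0 : ℝ) < 2 ^ N := by positivity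
      have hA2 : ((2 ^ A : ℕ) : ℝ) = (2 : ℝ) ^ A := by push_cast; ring
      have hcast : (m' : ℝ) = 2 ^ A + (j : ℝ) := by rw [hmeq]; push_cast; ring
      rw [hcast]
      rw [hA2] at ihA
      nlinarith [mul_nonneg hjpos (le_of_lt h2N)]

/- ### Measure-theoretic facts -/

lemma mu_univ : μ Set.univ = 1 := by
  have h := MeasureTheory.Measure.addHaarMeasure_self
    (K₀ := (⊤ : TopologicalSpace.PositiveCompacts G))
  rwa [TopologicalSpace.PositiveCompacts.coe_top] at h

/-- The cylinder determined by a pattern on the first `N` coordinates. -/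
def cosetN (N : ℕ) (v : Fin N → ZMod 2) : Set G := {x | ∀ i : Fin N, x (i : ℕ) = v i}

lemma isOpen_cosetN (N : ℕ) (v : Fin N → ZMod 2) : IsOpen (cosetN N v) := by
  have : cosetN N v = ⋂ i : Fin N, (fun x : G => x (i : ℕ)) ⁻¹' {v i} := by
    ext x; simp [cosetN, Set.mem_iInter]
  rw [this]
  exact isOpen_iInter_of_finite fun i =>
    (isOpen_discrete {v i}).preimage (continuous_apply (i : ℕ))

lemma measurableSet_cosetN (N : ℕ) (v : Fin N → ZMod 2) : MeasurableSet (cosetN N v) :=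
  (isOpen_cosetN N v).measurableSet

lemma mem_cosetN_iff {N : ℕ} {v : Fin N → ZMod 2} {x : G} :
    x ∈ cosetN N v ↔ resN N x = v := by
  constructor
  · intro h; funext i; exact h i
  · intro h i; rw [← h]; rfl

lemma cosetN_preimage (N : ℕ) (v : Fin N → ZMod 2) :
    cosetN N v = (fun x => extN N v + x) ⁻¹' (cosetN N (0 : Fin N → ZMod 2)) := by
  have key : ∀ a b : ZMod 2, a + b = 0 ↔ b = a := by decide
  ext x
  simp only [cosetN, Set.mem_preimage, Set.mem_setOf_eq, Pi.zero_apply]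
  constructor
  · intro h i
    have hx : (extN N v + x) (i : ℕ) = extN N v (i : ℕ) + x (i : ℕ) := rfl
    rw [hx, extN_lt v i.isLt, Fin.eta, key, h i]
  · intro h i
    have hh := h i
    have hx : (extN N v + x) (i : ℕ) = extN N v (i : ℕ) + x (i : ℕ) := rfl
    rw [hx, extN_lt v i.isLt, Fin.eta, key] at hh
    exact hh

instance : μ.IsAddLeftInvariant := by unfold μ; infer_instance

lemma mu_cosetN (N : ℕ) (v : Fin N → ZMod 2) :
    μ (cosetN N v) = ((2 : ℝ≥0∞) ^ N)⁻¹ := by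
  have heq : ∀ v : Fin N → ZMod 2, μ (cosetN N v) = μ (cosetN N 0) := by
    intro v
    rw [cosetN_preimage N v]
    exact measure_preimage_add μ (extN N v) _
  have hcover : (Set.univ : Set G) = ⋃ v : Fin N → ZMod 2, cosetN N v := by
    ext x
    simp only [Set.mem_univ, Set.mem_iUnion, true_iff]
    exact ⟨resN N x, fun i => rfl⟩
  have hdisj : Pairwise (Function.onFun Disjoint (cosetN N)) := by
    intro v w hvw
    rw [Function.onFun, Set.disjoint_left]
    intro x hx hx'
    exact hvw (mem_cosetN_iff.mp hx ▸ (mem_cosetN_iff.mp hx').symm ▸ rfl)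
  have h1 : (1 : ℝ≥0∞) = ∑ v : Fin N → ZMod 2, μ (cosetN N v) := by
    rw [← mu_univ, hcover, measure_iUnion hdisj (fun v => measurableSet_cosetN N v),
      tsum_fintype]
  rw [Finset.sum_congr rfl (fun v _ => heq v)] at h1
  rw [Finset.sum_const, Finset.card_univ, Fintype.card_fun, Fintype.card_fin,
    ZMod.card] at h1
  have hcard : ((2 ^ N : ℕ) : ℝ≥0∞) * μ (cosetN N 0) = 1 := by
    rw [← nsmul_eq_mul, ← h1]
  have h2 : ((2 ^ N : ℕ) : ℝ≥0∞) = (2 : ℝ≥0∞) ^ N := by push_cast; ring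
  rw [heq v]
  rw [h2] at hcard
  have hne0 : ((2 : ℝ≥0∞) ^ N) ≠ 0 := by positivity
  have hnetop : ((2 : ℝ≥0∞) ^ N) ≠ ⊤ := by
    exact ENNReal.pow_ne_top (by norm_num)
  calc μ (cosetN N 0) = ((2 : ℝ≥0∞) ^ N)⁻¹ * ((2 : ℝ≥0∞) ^ N * μ (cosetN N 0)) := by
        rw [← mul_assoc, ENNReal.inv_mul_cancel hne0 hnetop, one_mul]
    _ = ((2 : ℝ≥0∞) ^ N)⁻¹ := by rw [hcard, mul_one]

/-- Lebesgue integral of a function depending only on the first `N` coordinates. -/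
lemma lintegral_cylinder {N : ℕ} {f : G → ℝ}
    (hf : ∀ x y : G, (∀ k, k < N → x k = y k) → f x = f y) :
    ∫⁻ x, ENNReal.ofReal |f x| ∂μ
      = (∑ v : Fin N → ZMod 2, ENNReal.ofReal |f (extN N v)|) * ((2 : ℝ≥0∞) ^ N)⁻¹ := by
  have hagree : ∀ x : G, f x = f (extN N (resN N x)) := by
    intro x
    refine hf x _ fun k hk => ?_
    rw [extN_lt _ hk]
    rfl
  have hpt : ∀ x : G, ENNReal.ofReal |f x|
      = ∑ v : Fin N → ZMod 2,
          (cosetN N v).indicator (fun _ => ENNReal.ofReal |f (extN N v)|) x := by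
    intro x
    rw [Finset.sum_eq_single (resN N x)]
    · rw [Set.indicator_of_mem (mem_cosetN_iff.mpr rfl), ← hagree x]
    · intro v _ hv
      exact Set.indicator_of_notMem (fun hm => hv ((mem_cosetN_iff.mp hm).symm)) _
    · intro h
      exact absurd (Finset.mem_univ _) h
  calc ∫⁻ x, ENNReal.ofReal |f x| ∂μ
      = ∫⁻ x, ∑ v : Fin N → ZMod 2,
          (cosetN N v).indicator (fun _ => ENNReal.ofReal |f (extN N v)|) x ∂μ := by
        exact lintegral_congr hpt
    _ = ∑ v : Fin N → ZMod 2, ∫⁻ x,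
          (cosetN N v).indicator (fun _ => ENNReal.ofReal |f (extN N v)|) x ∂μ := by
        exact lintegral_finset_sum _ fun v _ =>
          (measurable_const.indicator (measurableSet_cosetN N v))
    _ = ∑ v : Fin N → ZMod 2, ENNReal.ofReal |f (extN N v)| * μ (cosetN N v) := by
        exact Finset.sum_congr rfl fun v _ =>
          lintegral_indicator_const (measurableSet_cosetN N v) _
    _ = (∑ v : Fin N → ZMod 2, ENNReal.ofReal |f (extN N v)|) * ((2 : ℝ≥0∞) ^ N)⁻¹ := by
        rw [Finset.sum_mul]
        exact Finset.sum_congr rfl fun v _ => by rw [mu_cosetN]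

/- ### Cylinder (first-N-coordinates) dependence -/

lemma rad_congr {k N : ℕ} (hk : k < N) {x y : G} (h : ∀ k', k' < N → x k' = y k') :
    rad k x = rad k y := by unfold rad; rw [h k hk]

lemma walsh_congr {j N : ℕ} (hj : j < 2 ^ N) {x y : G}
    (h : ∀ k', k' < N → x k' = y k') : walsh j x = walsh j y := by
  rw [walsh_eq_prod hj, walsh_eq_prod hj]
  exact Finset.prod_congr rfl fun k hk => by
    rw [rad_congr (Finset.mem_range.mp hk) h]

lemma kacz_congr {j N : ℕ} (hj : j < 2 ^ N) {x y : G}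
    (h : ∀ k', k' < N → x k' = y k') : kacz j x = kacz j y := by
  by_cases h0 : j = 0
  · subst h0; rw [kacz_zero, kacz_zero]
  · have hlg : lg j < N := Nat.log_lt_of_lt_pow h0 hj
    unfold kacz
    rw [if_neg h0, if_neg h0, rad_congr hlg h]
    congr 1
    exact Finset.prod_congr rfl fun k _ => by
      rw [rad_congr (by omega : lg j - 1 - k < N) h]

lemma KK_congr {n N : ℕ} (hn : n ≤ 2 ^ N) {x y : G}
    (h : ∀ k', k' < N → x k' = y k') : KK n x = KK n y := by
  unfold KK DK
  congr 1
  refine Finset.sum_congr rfl fun k hk => Finset.sum_congr rfl fun j hj => ?_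
  have : j < 2 ^ N :=
    lt_of_lt_of_le (lt_of_lt_of_le (Finset.mem_range.mp hj)
      (le_of_lt (Finset.mem_range.mp hk))) (le_trans (Nat.le_refl _) hn)
  exact kacz_congr this h

/- ### Part 1: uniform `L¹` bound for the Walsh–Kaczmarz–Fejér kernels -/

lemma KK_L1_bound (n : ℕ) (hn : 1 ≤ n) :
    ∫⁻ x, ENNReal.ofReal |KK n x| ∂μ ≤ ENNReal.ofReal 3 := by
  have hn2 : n ≤ 2 ^ n := le_of_lt Nat.lt_two_pow_self
  rw [lintegral_cylinder (fun x y h => KK_congr hn2 h)]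
  have habs : ∀ x : G, |KK n x| = |SDK n x| / n := by
    intro x
    rw [KK_eq, abs_div, Nat.abs_cast]
  have hs : asum n (KK n) ≤ 3 * 2 ^ n := by
    have h1 : asum n (KK n) = asum n (SDK n) / n := by
      unfold asum
      rw [Finset.sum_div]
      exact Finset.sum_congr rfl fun v _ => habs _
    rw [h1]
    have h2 := asum_SDK_le n hn2
    have hnpos : (0 : ℝ) < n := by exact_mod_cast hn
    rw [div_le_iff₀ hnpos]
    calc asum n (SDK n) ≤ 3 * n * 2 ^ n := h2
      _ = 3 * 2 ^ n * n := by ring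
  have hsum : ∑ v : Fin n → ZMod 2, ENNReal.ofReal |KK n (extN n v)|
      = ENNReal.ofReal (asum n (KK n)) := by
    unfold asum
    rw [ENNReal.ofReal_sum_of_nonneg fun v _ => abs_nonneg _]
  rw [hsum]
  have hne0 : ((2 : ℝ≥0∞) ^ n) ≠ 0 := by positivity
  have hnetop : ((2 : ℝ≥0∞) ^ n) ≠ ⊤ := ENNReal.pow_ne_top (by norm_num)
  calc ENNReal.ofReal (asum n (KK n)) * ((2 : ℝ≥0∞) ^ n)⁻¹
      ≤ ENNReal.ofReal (3 * 2 ^ n) * ((2 : ℝ≥0∞) ^ n)⁻¹ := by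
        exact mul_le_mul_left (ENNReal.ofReal_le_ofReal hs) _
    _ = ENNReal.ofReal 3 * ((2 : ℝ≥0∞) ^ n * ((2 : ℝ≥0∞) ^ n)⁻¹) := by
        rw [ENNReal.ofReal_mul (by norm_num), ← mul_assoc]
        congr 1
        rw [ENNReal.ofReal_pow (by norm_num)]
        norm_num
    _ = ENNReal.ofReal 3 := by
        rw [ENNReal.mul_inv_cancel hne0 hnetop, mul_one]

/- ### Part 2: boundedness of the Fejér means on `L^∞` -/

instance : IsProbabilityMeasure μ := ⟨mu_univ⟩

lemma continuous_rad (k : ℕ) : Continuous (rad k) :=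
  (continuous_of_discreteTopology (f := fun a : ZMod 2 => ((-1 : ℝ) ^ a.val))).comp
    (continuous_apply k)

lemma continuous_kacz (j : ℕ) : Continuous (kacz j) := by
  unfold kacz
  split
  · exact continuous_const
  · exact ((continuous_rad _).mul
      (continuous_finset_prod _ fun k _ => (continuous_rad _).pow _))

lemma continuous_DK (j : ℕ) : Continuous (DK j) :=
  continuous_finset_sum _ fun k _ => continuous_kacz k

lemma continuous_KK (n : ℕ) : Continuous (KK n) :=
  (continuous_finset_sum _ fun k _ => continuous_DK k).div_const _

lemma kacz_abs (j : ℕ) (x : G) : |kacz j x| = 1 := by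
  unfold kacz
  split
  · simp
  · rw [abs_mul, rad_abs, one_mul, Finset.abs_prod]
    rw [Finset.prod_congr rfl fun k _ => by rw [abs_pow, rad_abs, one_pow]]
    simp

lemma kacz_add (j : ℕ) (x y : G) : kacz j (x + y) = kacz j x * kacz j y := by
  unfold kacz
  split
  · ring
  · rw [rad_add]
    rw [Finset.prod_congr rfl fun k _ => by rw [rad_add, mul_pow]]
    rw [Finset.prod_mul_distrib]
    ring

lemma KK_bdd (n : ℕ) (x : G) : |KK n x| ≤ n * n := by
  have h1 : ∀ j, |DK j x| ≤ (j : ℝ) := by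
    intro j
    unfold DK
    calc |∑ k ∈ Finset.range j, kacz k x| ≤ ∑ k ∈ Finset.range j, |kacz k x| :=
          Finset.abs_sum_le_sum_abs _ _
      _ = (j : ℝ) := by
          rw [Finset.sum_congr rfl fun k _ => kacz_abs k x]
          simp
  rcases Nat.eq_zero_or_pos n with h | h
  · subst h
    unfold KK
    simp
  · have hn : (1 : ℝ) ≤ n := by exact_mod_cast h
    rw [KK_eq, abs_div, Nat.abs_cast, div_le_iff₀ (by linarith)]
    calc |SDK n x| ≤ ∑ k ∈ Finset.range n, |DK k x| := Finset.abs_sum_le_sum_abs _ _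
      _ ≤ ∑ k ∈ Finset.range n, (n : ℝ) := Finset.sum_le_sum fun k hk => by
          calc |DK k x| ≤ (k : ℝ) := h1 k
            _ ≤ (n : ℝ) := by
                exact_mod_cast le_of_lt (Finset.mem_range.mp hk)
      _ = (n : ℝ) * n := by rw [Finset.sum_const, Finset.card_range, nsmul_eq_mul]
      _ ≤ n * n * n := by nlinarith

lemma DK_abs_le (j : ℕ) (x : G) : |DK j x| ≤ (j : ℝ) := by
  unfold DK
  calc |∑ k ∈ Finset.range j, kacz k x| ≤ ∑ k ∈ Finset.range j, |kacz k x| :=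
        Finset.abs_sum_le_sum_abs _ _
    _ = (j : ℝ) := by
        rw [Finset.sum_congr rfl fun k _ => kacz_abs k x]
        simp

lemma integrable_mul_bdd {f : G → ℝ} (hf : Integrable f μ) (g : G → ℝ)
    (hg : Continuous g) (C : ℝ) (hC : ∀ t, |g t| ≤ C) :
    Integrable (fun t => f t * g t) μ := by
  have h := hf.bdd_mul hg.aestronglyMeasurable
    (Filter.Eventually.of_forall fun t => by simpa [Real.norm_eq_abs] using hC t)
  simpa [mul_comm] using h

lemma SK_repr {f : G → ℝ} (hf : Integrable f μ) (j : ℕ) (x : G) :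
    SK f j x = ∫ t, f t * DK j (x + t) ∂μ := by
  unfold SK coefK
  have h1 : ∀ i : ℕ, (∫ t, f t * kacz i t ∂μ) * kacz i x
      = ∫ t, f t * kacz i (x + t) ∂μ := by
    intro i
    rw [← integral_mul_const]
    congr 1
    funext t
    rw [kacz_add]
    ring
  have hc : ∀ i : ℕ, Continuous fun t : G => kacz i (x + t) := fun i =>
    (continuous_kacz i).comp (continuous_const.add continuous_id)
  rw [Finset.sum_congr rfl fun i _ => h1 i,
    ← integral_finset_sum _ fun i _ => integrable_mul_bdd hf (fun t => kacz i (x + t))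
      (hc i) 1 (fun t => le_of_eq (kacz_abs i (x + t)))]
  congr 1
  funext t
  unfold DK
  rw [Finset.mul_sum]

lemma sigmaK_repr {f : G → ℝ} (hf : Integrable f μ) (n : ℕ) (x : G) :
    sigmaK f n x = ∫ t, f t * KK n (x + t) ∂μ := by
  unfold sigmaK
  have hc : ∀ j : ℕ, Continuous fun t : G => DK j (x + t) := fun j =>
    (continuous_DK j).comp (continuous_const.add continuous_id)
  rw [Finset.sum_congr rfl fun j _ => SK_repr hf j x,
    ← integral_finset_sum _ fun j _ => integrable_mul_bdd hf (fun t => DK j (x + t))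
      (hc j) j (fun t => DK_abs_le j (x + t)),
    ← integral_div]
  congr 1
  funext t
  unfold KK
  rw [← Finset.mul_sum, mul_div_assoc]

theorem aux_kaczmarz_main :
    ∃ c : ℝ, 0 < c ∧
      (∀ n : ℕ, 1 ≤ n → ∫⁻ x, ENNReal.ofReal |KK n x| ∂μ ≤ ENNReal.ofReal c) ∧
      (∀ f : G → ℝ, MemLp f ⊤ μ → ∀ n : ℕ, 1 ≤ n →
        eLpNorm (sigmaK f n) ⊤ μ ≤ ENNReal.ofReal c * eLpNorm f ⊤ μ) := by
  refine ⟨3, by norm_num, fun n hn => KK_L1_bound n hn, ?_⟩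
  intro f hf n hn
  have hfi : Integrable f μ := hf.integrable le_top
  set C := (eLpNorm f ⊤ μ).toReal with hCdef
  have hCnn : (0 : ℝ) ≤ C := ENNReal.toReal_nonneg
  have hftop : eLpNorm f ⊤ μ ≠ ⊤ := hf.2.ne
  have hfae : ∀ᵐ t ∂μ, |f t| ≤ C := by
    filter_upwards [MeasureTheory.ae_le_eLpNormEssSup (f := f) (μ := μ)] with t ht
    have h2 : (‖f t‖₊ : ℝ≥0∞) ≤ eLpNorm f ⊤ μ := by
      rw [eLpNorm_exponent_top]
      exact_mod_cast ht
    have h3 := ENNReal.toReal_mono hftop h2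
    rwa [ENNReal.coe_toReal, coe_nnnorm, Real.norm_eq_abs] at h3
  have hKKcont : Continuous fun t => |KK n t| := (continuous_KK n).abs
  have hKKint : Integrable (fun t => |KK n t|) μ :=
    (memLp_top_of_bound hKKcont.aestronglyMeasurable ((n : ℝ) * n)
      (Filter.Eventually.of_forall fun t => by
        simpa [Real.norm_eq_abs, abs_abs] using KK_bdd n t)).integrable le_top
  have hKKreal : ∫ t, |KK n t| ∂μ ≤ 3 := by
    rw [integral_eq_lintegral_of_nonneg_ae (Filter.Eventually.of_forall fun t => abs_nonneg _)
      hKKcont.aestronglyMeasurable]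
    have h4 := KK_L1_bound n hn
    calc (∫⁻ t, ENNReal.ofReal |KK n t| ∂μ).toReal
        ≤ (ENNReal.ofReal 3).toReal := ENNReal.toReal_mono ENNReal.ofReal_ne_top h4
      _ = 3 := by rw [ENNReal.toReal_ofReal]; norm_num
  have hpt : ∀ x : G, ‖sigmaK f n x‖ ≤ 3 * C := by
    intro x
    have hshift : Continuous fun t : G => KK n (x + t) :=
      (continuous_KK n).comp (continuous_const.add continuous_id)
    have hint1 : Integrable (fun t => f t * KK n (x + t)) μ :=
      integrable_mul_bdd hfi _ hshift ((n : ℝ) * n) (fun t => KK_bdd n (x + t))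
    have hint2 : Integrable (fun t => |KK n (x + t)|) μ :=
      (memLp_top_of_bound hshift.abs.aestronglyMeasurable ((n : ℝ) * n)
        (Filter.Eventually.of_forall fun t => by
          simpa [Real.norm_eq_abs, abs_abs] using KK_bdd n (x + t))).integrable le_top
    rw [Real.norm_eq_abs, sigmaK_repr hfi n x]
    calc |∫ t, f t * KK n (x + t) ∂μ|
        ≤ ∫ t, |f t| * |KK n (x + t)| ∂μ := by
          simpa [Real.norm_eq_abs, abs_mul] using
            norm_integral_le_integral_norm (fun t => f t * KK n (x + t)) (μ := μ)
      _ ≤ ∫ t, C * |KK n (x + t)| ∂μ := by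
          refine integral_mono_ae (by simpa [abs_mul] using hint1.abs)
            (hint2.const_mul C) ?_
          filter_upwards [hfae] with t ht
          exact mul_le_mul_of_nonneg_right ht (abs_nonneg _)
      _ = C * ∫ t, |KK n (x + t)| ∂μ := by rw [integral_const_mul]
      _ = C * ∫ t, |KK n t| ∂μ := by
          rw [integral_add_left_eq_self (fun t => |KK n t|) x]
      _ ≤ C * 3 := mul_le_mul_of_nonneg_left hKKreal hCnn
      _ = 3 * C := by ring
  have h5 := eLpNorm_le_of_ae_bound (μ := μ) (p := ⊤) (f := sigmaK f n)
    (Filter.Eventually.of_forall hpt)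
  have h6 : (μ Set.univ) ^ ((⊤ : ℝ≥0∞).toReal)⁻¹ = 1 := by
    simp
  rw [h6, one_mul] at h5
  calc eLpNorm (sigmaK f n) ⊤ μ ≤ ENNReal.ofReal (3 * C) := h5
    _ = ENNReal.ofReal 3 * ENNReal.ofReal C := ENNReal.ofReal_mul (by norm_num)
    _ = ENNReal.ofReal 3 * eLpNorm f ⊤ μ := by
        rw [hCdef, ENNReal.ofReal_toReal hftop]

/-- The Walsh–Kaczmarz–Fejér kernels are uniformly bounded in `L¹`, and consequently the
Fejér means are uniformly bounded on `L^∞`. -/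
theorem kaczmarz_fejer_kernel_L1_bounded :
    ∃ c : ℝ, 0 < c ∧
      (∀ n : ℕ, 1 ≤ n → ∫⁻ x, ENNReal.ofReal |KK n x| ∂μ ≤ ENNReal.ofReal c) ∧
      (∀ f : G → ℝ, MemLp f ⊤ μ → ∀ n : ℕ, 1 ≤ n →
        eLpNorm (sigmaK f n) ⊤ μ ≤ ENNReal.ofReal c * eLpNorm f ⊤ μ) := by
  exact aux_kaczmarz_main
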